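/- (Existence and uniqueness for the three-phase Stefan problem with Dirichlet condition, reduced form.) Assume α₂ > α₃ and A > B. Then there exists a unique μ₁ > z₀ such that Q(μ₁) = V(μ₂), where μ₂ ≥ 0 is the unique number satisfying erf(μ₂·√(α₁/α₂)) = H(μ₁). -/

import Mathlib

noncomputable section

/-- The error function `erf x = (2/√π) ∫₀ˣ exp(−s²) ds`. -/
def erf (x : ℝ) : ℝ := (2 / Real.sqrt Real.pi) * ∫ s in (0:ℝ)..x, Real.exp (-(s^2))

/-- The complementary error function. -/
def erfc (x : ℝ) : ℝ := 1 - erf x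

/-- Physical data of the three-phase Stefan problem: positive thermal conductivities,
specific heats, mass density, latent heats, and temperatures `B > C > D`. -/
structure Params where
  k₁ : ℝ
  k₂ : ℝ
  k₃ : ℝ
  c₁ : ℝ
  c₂ : ℝ
  c₃ : ℝ
  ρ : ℝ
  ℓ₁ : ℝ
  ℓ₂ : ℝ
  B : ℝ
  C : ℝ
  D : ℝ
  hk₁ : 0 < k₁
  hk₂ : 0 < k₂
  hk₃ : 0 < k₃
  hc₁ : 0 < c₁
  hc₂ : 0 < c₂
  hc₃ : 0 < c₃
  hρ : 0 < ρ
  hℓ₁ : 0 < ℓ₁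
  hℓ₂ : 0 < ℓ₂
  hBC : C < B
  hCD : D < C

namespace Params

/-- Thermal diffusivity of phase 1. -/
def α₁ (p : Params) : ℝ := p.k₁ / (p.ρ * p.c₁)

/-- Thermal diffusivity of phase 2. -/
def α₂ (p : Params) : ℝ := p.k₂ / (p.ρ * p.c₂)

/-- Thermal diffusivity of phase 3. -/
def α₃ (p : Params) : ℝ := p.k₃ / (p.ρ * p.c₃)

/-- Stefan number `Ste₁ = c₁(C−D)/ℓ₁`. -/
def Ste₁ (p : Params) : ℝ := p.c₁ * (p.C - p.D) / p.ℓ₁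

/-- Stefan number `Ste₂ = c₂(B−C)/ℓ₂`. -/
def Ste₂ (p : Params) : ℝ := p.c₂ * (p.B - p.C) / p.ℓ₂

/-- `φ(z) = z + (Ste₁/√π) exp(−z²)/erfc(z)`. -/
def φ (p : Params) (z : ℝ) : ℝ :=
  z + (p.Ste₁ / Real.sqrt Real.pi) * Real.exp (-(z^2)) / erfc z

/-- `H(z) = erf(z√(α₁/α₂)) − (Ste₂/√π)(ℓ₂/ℓ₁)√(k₂c₁/(k₁c₂)) exp(−z²α₁/α₂)/φ(z)`. -/
def H (p : Params) (z : ℝ) : ℝ :=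
  erf (z * Real.sqrt (p.α₁ / p.α₂)) -
    (p.Ste₂ / Real.sqrt Real.pi) * (p.ℓ₂ / p.ℓ₁) *
      Real.sqrt (p.k₂ * p.c₁ / (p.k₁ * p.c₂)) *
      (Real.exp (-(z^2) * (p.α₁ / p.α₂)) / p.φ z)

/-- `Q(z) = (ℓ₁/ℓ₂) φ(z) exp(z² α₁/α₂)`. -/
def Q (p : Params) (z : ℝ) : ℝ :=
  (p.ℓ₁ / p.ℓ₂) * p.φ z * Real.exp (z^2 * (p.α₁ / p.α₂))

/-- The function `T` arising from the Robin (convective) boundary condition with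
heat-transfer coefficient `h₀` and bulk temperature `Ainf`. -/
def T (p : Params) (h₀ Ainf : ℝ) (z : ℝ) : ℝ :=
  (p.Ste₂ / (Real.sqrt Real.pi * p.c₂)) * ((Ainf - p.B) / (p.B - p.C)) *
    Real.sqrt (p.k₃ * p.c₁ * p.c₃ / p.k₁) *
    (Real.exp (-(z^2) * p.α₁ * (1 / p.α₃ - 1 / p.α₂)) /
      (p.k₃ / (h₀ * Real.sqrt (Real.pi * p.α₃)) + erf (z * Real.sqrt (p.α₁ / p.α₃)))) -
  z * Real.exp (z^2 * (p.α₁ / p.α₂))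

/-- The function `V` arising from the Dirichlet boundary condition with temperature `A`. -/
def V (p : Params) (A : ℝ) (z : ℝ) : ℝ :=
  ((A - p.B) / p.ℓ₂) * Real.sqrt (p.c₁ * p.c₃ * p.k₃ / (Real.pi * p.k₁)) *
    (Real.exp (-(z^2) * (p.α₁ / p.α₃ - p.α₁ / p.α₂)) / erf (z * Real.sqrt (p.α₁ / p.α₃))) -
  z * Real.exp (z^2 * (p.α₁ / p.α₂))

/-- The function `P` arising from the Neumann boundary condition with flux coefficient `q₀`. -/
def P (p : Params) (q₀ : ℝ) (z : ℝ) : ℝ :=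
  Real.exp (z^2 * (p.α₁ / p.α₂)) *
    (-z + (q₀ / p.ℓ₂) * Real.sqrt (p.c₁ / (p.ρ * p.k₁)) * Real.exp (-(z^2) * (p.α₁ / p.α₃)))

/-- Critical heat-transfer coefficient `h₂`. -/
def h2 (p : Params) (Ainf z₀ : ℝ) : ℝ :=
  ((p.B - p.C) / (Ainf - p.B)) *
    Real.sqrt (p.k₂ * p.k₃ * p.c₂ / (Real.pi * p.c₃ * p.α₃)) *
    (1 / erf (z₀ * Real.sqrt (p.α₁ / p.α₂)))

/-- Critical heat-flux coefficient `q₂`. -/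
def q2 (p : Params) (z₀ : ℝ) : ℝ :=
  p.k₂ * (p.B - p.C) / (Real.sqrt (p.α₂ * Real.pi) * erf (z₀ * Real.sqrt (p.α₁ / p.α₂)))

end Params

/-!
For `μ₁ > z₀` we have `0 < H μ₁ < 1`, and `x ↦ erf (x √(α₁/α₂))` is a strictly increasing
topological embedding onto a set containing `[0, 1)`, so `μ₂` is a function of `μ₁`; it is
continuous, strictly increasing, and tends to `0⁺` as `μ₁ → z₀⁺`. The problem becomes the zero of
`Q μ₁ - V (μ₂ μ₁)`. Since the inverse Mills ratio `exp (-z²) / erfc z` increases, so do `φ` and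
`Q`, while `V` decreases when `α₃ < α₂` and `A > B`; hence the difference is strictly increasing.
It tends to `-∞` at `z₀⁺` because `V (0⁺) = +∞`, and to `+∞` at infinity because
`Q z ≥ (ℓ₁/ℓ₂) z`, so it has exactly one zero.
-/

open Real Set Filter Topology MeasureTheory Function

lemma integrable_exp_neg_sq : Integrable fun s : ℝ => exp (-s ^ 2) := by
  simpa using integrable_exp_neg_mul_sq one_pos

@[fun_prop]
lemma continuous_erf : Continuous erf :=
  continuous_const.mul <| intervalIntegral.continuous_primitive
    (fun _ _ => integrable_exp_neg_sq.intervalIntegrable) 0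

@[simp]
lemma erf_zero : erf 0 = 0 := by simp [erf]

lemma strictMono_erf : StrictMono erf := fun a b hab => by
  have hpos : 0 < ∫ s in a..b, exp (-s ^ 2) :=
    intervalIntegral.intervalIntegral_pos_of_pos integrable_exp_neg_sq.intervalIntegrable
      (fun _ => exp_pos _) hab
  have hsplit := intervalIntegral.integral_add_adjacent_intervals
    (integrable_exp_neg_sq.intervalIntegrable (a := 0) (b := a))
    integrable_exp_neg_sq.intervalIntegrable (μ := volume) (c := b)
  unfold erf
  gcongr
  linarith

lemma erf_pos {x : ℝ} (hx : 0 < x) : 0 < erf x := by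
  simpa using strictMono_erf hx

lemma integral_Ioi_zero_exp_neg_sq : ∫ s in Ioi (0 : ℝ), exp (-s ^ 2) = √π / 2 := by
  simpa using integral_gaussian_Ioi 1

lemma erfc_eq_integral_Ioi (x : ℝ) : erfc x = 2 / √π * ∫ s in Ioi x, exp (-s ^ 2) := by
  rw [erfc, erf, ← intervalIntegral.integral_Ioi_sub_Ioi' integrable_exp_neg_sq.integrableOn
    integrable_exp_neg_sq.integrableOn, integral_Ioi_zero_exp_neg_sq]
  field_simp
  ring

lemma erfc_pos (x : ℝ) : 0 < erfc x := by
  rw [erfc_eq_integral_Ioi]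
  have : 0 < ∫ s in Ioi x, exp (-s ^ 2) := by
    rw [setIntegral_pos_iff_support_of_nonneg_ae (.of_forall fun _ => (exp_pos _).le)
      integrable_exp_neg_sq.integrableOn]
    simp [Function.support, (exp_pos _).ne']
  positivity

lemma erf_lt_one (x : ℝ) : erf x < 1 := by
  linarith [erfc_pos x, show erfc x = 1 - erf x from rfl]

lemma tendsto_erf_atTop : Tendsto erf atTop (𝓝 1) := by
  have := (intervalIntegral_tendsto_integral_Ioi 0 integrable_exp_neg_sq.integrableOn
    tendsto_id).const_mul (2 / √π)
  rwa [integral_Ioi_zero_exp_neg_sq, div_mul_div_cancel₀ (by positivity), div_self two_ne_zero]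
    at this

lemma Ico_subset_range_erf : Ico 0 1 ⊆ range erf := fun y ⟨hy₀, hy₁⟩ =>
  mem_range_of_exists_le_of_exists_ge continuous_erf ⟨0, by simpa using hy₀⟩
    ((tendsto_erf_atTop.eventually (eventually_ge_nhds hy₁)).exists)

lemma strictMono_erf_comp_mul {c : ℝ} (hc : 0 < c) : StrictMono fun x => erf (x * c) :=
  strictMono_erf.comp (strictMono_mul_right_of_pos hc)

lemma isEmbedding_erf_comp_mul {c : ℝ} (hc : 0 < c) : IsEmbedding fun x => erf (x * c) :=
  (strictMono_erf_comp_mul hc).isEmbedding_of_ordConnected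
    (isPreconnected_range (by fun_prop)).ordConnected

lemma integral_Ioi_exp_neg_sq (x : ℝ) :
    ∫ s in Ioi x, exp (-s ^ 2) = exp (-x ^ 2) * ∫ u in Ioi 0, exp (-u ^ 2 - 2 * u * x) := by
  have hshift := (measurePreserving_add_right volume x).setIntegral_preimage_emb
    (MeasurableEquiv.addRight x).measurableEmbedding (fun s => exp (-s ^ 2)) (Ioi x)
  have hpre : (· + x) ⁻¹' Ioi x = Ioi 0 := by ext; simp
  rw [← hshift, hpre, ← integral_const_mul]
  congr 1 with u
  rw [← exp_add]
  ring_nf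

lemma integrableOn_exp_neg_sq_sub_mul (x : ℝ) :
    IntegrableOn (fun u => exp (-u ^ 2 - 2 * u * x)) (Ioi 0) := by
  have : (fun u => exp (-u ^ 2 - 2 * u * x)) = fun u => exp (x ^ 2) * exp (-(u + x) ^ 2) := by
    ext u; rw [← exp_add]; ring_nf
  rw [this]
  exact ((integrable_exp_neg_sq.comp_add_right x).integrableOn).const_mul _

/-- The inverse Mills ratio of the Gaussian is increasing: its reciprocal is, up to a constant,
`∫_{u>0} exp(-u² - 2ux) du`, which decreases in `x`. -/
lemma monotone_exp_neg_sq_div_erfc : Monotone fun x => exp (-x ^ 2) / erfc x := by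
  set G : ℝ → ℝ := fun x => ∫ u in Ioi 0, exp (-u ^ 2 - 2 * u * x)
  have hG_pos : ∀ x, 0 < G x := fun x => by
    have := erfc_pos x
    rw [erfc_eq_integral_Ioi, integral_Ioi_exp_neg_sq] at this
    exact pos_of_mul_pos_right (pos_of_mul_pos_right this (by positivity)) (exp_pos _).le
  have hG : ∀ x, exp (-x ^ 2) / erfc x = √π / 2 / G x := fun x => by
    rw [erfc_eq_integral_Ioi, integral_Ioi_exp_neg_sq]
    change _ / (_ * (_ * G x)) = _
    have := hG_pos x
    field_simp
  intro a b hab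
  simp only [hG]
  gcongr
  · exact hG_pos _
  · refine setIntegral_mono_on (integrableOn_exp_neg_sq_sub_mul b)
      (integrableOn_exp_neg_sq_sub_mul a) measurableSet_Ioi fun u (hu : 0 < u) => ?_
    gcongr

lemma StrictMonoOn.existsUnique_Ioi_eq_of_tendsto {α δ : Type*}
    [ConditionallyCompleteLinearOrder α] [TopologicalSpace α] [OrderTopology α]
    [DenselyOrdered α] [NoMaxOrder α] [LinearOrder δ]
    [TopologicalSpace δ] [OrderClosedTopology δ]
    {f : α → δ} {a : α} {c : δ} (hmono : StrictMonoOn f (Ioi a))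
    (hcont : ContinuousOn f (Ioi a)) (hbot : Tendsto f (𝓝[>] a) atBot)
    (htop : Tendsto f atTop atTop) : ∃! x, a < x ∧ f x = c := by
  obtain ⟨x, hxc, hx⟩ :=
    ((hbot.eventually (eventually_le_atBot c)).and self_mem_nhdsWithin).exists
  obtain ⟨y, hyc, hy⟩ :=
    ((htop.eventually (eventually_ge_atTop c)).and (eventually_gt_atTop a)).exists
  obtain ⟨z, hz, hzc⟩ := hcont.surjOn_Icc hx hy ⟨hxc, hyc⟩
  exact ⟨z, ⟨hz, hzc⟩, fun w ⟨hw, hwc⟩ => hmono.injOn hw hz (hwc.trans hzc.symm)⟩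

namespace Params

variable (p : Params)

lemma α₁_pos : 0 < p.α₁ := div_pos p.hk₁ (mul_pos p.hρ p.hc₁)

lemma α₂_pos : 0 < p.α₂ := div_pos p.hk₂ (mul_pos p.hρ p.hc₂)

lemma α₃_pos : 0 < p.α₃ := div_pos p.hk₃ (mul_pos p.hρ p.hc₃)

lemma sqrt_α₁_div_α₂_pos : 0 < √(p.α₁ / p.α₂) := sqrt_pos.2 (div_pos p.α₁_pos p.α₂_pos)

lemma sqrt_α₁_div_α₃_pos : 0 < √(p.α₁ / p.α₃) := sqrt_pos.2 (div_pos p.α₁_pos p.α₃_pos)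

lemma Ste₁_pos : 0 < p.Ste₁ := div_pos (mul_pos p.hc₁ (sub_pos.mpr p.hCD)) p.hℓ₁

lemma Ste₂_pos : 0 < p.Ste₂ := div_pos (mul_pos p.hc₂ (sub_pos.mpr p.hBC)) p.hℓ₂

lemma φ_eq (z : ℝ) : p.φ z = z + p.Ste₁ / √π * (exp (-z ^ 2) / erfc z) := by
  rw [φ, mul_div_assoc]

lemma le_φ (z : ℝ) : z ≤ p.φ z := by
  have := p.Ste₁_pos
  have := erfc_pos z
  rw [φ_eq]
  simp only [le_add_iff_nonneg_right]
  positivity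

lemma φ_pos {z : ℝ} (hz : 0 ≤ z) : 0 < p.φ z := by
  have := p.Ste₁_pos
  have := erfc_pos z
  rw [φ_eq]
  positivity

lemma strictMono_φ : StrictMono p.φ := fun a b hab => by
  have := p.Ste₁_pos
  simp only [φ_eq]
  exact add_lt_add_of_lt_of_le hab (by gcongr ?_ * ?_; exact monotone_exp_neg_sq_div_erfc hab.le)

@[fun_prop]
lemma continuous_φ : Continuous p.φ := by
  have := fun z => (erfc_pos z).ne'
  unfold φ erfc
  fun_prop (disch := assumption)

lemma strictMonoOn_H : StrictMonoOn p.H (Ici 0) := fun a (ha : 0 ≤ a) b (hb : 0 ≤ b) hab => by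
  have := p.Ste₂_pos
  have := p.hℓ₁
  have := p.hℓ₂
  have := p.α₁_pos
  have := p.α₂_pos
  have := p.φ_pos ha
  have := p.strictMono_φ hab
  unfold H
  exact (sub_lt_sub_right (strictMono_erf_comp_mul p.sqrt_α₁_div_α₂_pos hab) _).trans_le
    (sub_le_sub_left (by gcongr) _)

lemma H_lt_one {z : ℝ} (hz : 0 ≤ z) : p.H z < 1 := by
  have := p.Ste₂_pos
  have := p.hℓ₁
  have := p.hℓ₂
  have := p.φ_pos hz
  have := erf_lt_one (z * √(p.α₁ / p.α₂))
  have : 0 < √(p.k₂ * p.c₁ / (p.k₁ * p.c₂)) := by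
    have := p.hk₁; have := p.hk₂; have := p.hc₁; have := p.hc₂
    positivity
  unfold H
  linarith [show 0 < p.Ste₂ / √π * (p.ℓ₂ / p.ℓ₁) * √(p.k₂ * p.c₁ / (p.k₁ * p.c₂)) *
    (exp (-z ^ 2 * (p.α₁ / p.α₂)) / p.φ z) by positivity]

lemma continuousOn_H : ContinuousOn p.H (Ici 0) := by
  have := fun z (hz : z ∈ Ici (0 : ℝ)) => (p.φ_pos hz).ne'
  unfold H
  fun_prop (disch := assumption)

@[fun_prop]
lemma continuous_Q : Continuous p.Q := by
  unfold Q
  fun_prop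

lemma strictMonoOn_Q : StrictMonoOn p.Q (Ici 0) := fun a (ha : 0 ≤ a) b (hb : 0 ≤ b) hab => by
  have := p.hℓ₁
  have := p.hℓ₂
  have := p.α₁_pos
  have := p.α₂_pos
  have := p.φ_pos ha
  have := p.strictMono_φ hab
  unfold Q
  gcongr

lemma tendsto_Q_atTop : Tendsto p.Q atTop atTop := by
  have hℓ : 0 < p.ℓ₁ / p.ℓ₂ := div_pos p.hℓ₁ p.hℓ₂
  refine tendsto_atTop_mono' _ ?_ (tendsto_id.const_mul_atTop hℓ)
  filter_upwards [eventually_ge_atTop 0] with z hz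
  have := p.α₁_pos
  have := p.α₂_pos
  calc p.ℓ₁ / p.ℓ₂ * z ≤ p.ℓ₁ / p.ℓ₂ * p.φ z * 1 := by
        rw [mul_one]; exact mul_le_mul_of_nonneg_left (p.le_φ z) hℓ.le
    _ ≤ p.Q z := by
        have := p.φ_pos hz
        unfold Q
        gcongr
        exact one_le_exp (by positivity)

variable {A : ℝ}

lemma strictAntiOn_V (hA : p.B < A) (hα : p.α₃ < p.α₂) : StrictAntiOn (p.V A) (Ioi 0) :=
  fun a (ha : 0 < a) b (hb : 0 < b) hab => by
  have := sub_pos.2 hA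
  have := p.hℓ₂
  have := p.α₁_pos
  have := p.α₂_pos
  have hd : 0 ≤ p.α₁ / p.α₃ - p.α₁ / p.α₂ :=
    sub_nonneg.2 (div_le_div_of_nonneg_left p.α₁_pos.le p.α₃_pos hα.le)
  have : 0 < erf (a * √(p.α₁ / p.α₃)) := erf_pos (mul_pos ha p.sqrt_α₁_div_α₃_pos)
  unfold V
  refine (sub_le_sub_right ?_ _).trans_lt (sub_lt_sub_left ?_ _)
  · gcongr
    exact (strictMono_erf_comp_mul p.sqrt_α₁_div_α₃_pos).monotone hab.le
  · gcongr

lemma continuousOn_V : ContinuousOn (p.V A) (Ioi 0) := by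
  have := fun z (hz : z ∈ Ioi (0 : ℝ)) => (erf_pos (mul_pos hz p.sqrt_α₁_div_α₃_pos)).ne'
  unfold V
  fun_prop (disch := assumption)

lemma tendsto_V_nhdsGT_zero (hA : p.B < A) : Tendsto (p.V A) (𝓝[>] 0) atTop := by
  set K := (A - p.B) / p.ℓ₂ * √(p.c₁ * p.c₃ * p.k₃ / (π * p.k₁))
  have hK : 0 < K := by
    have := sub_pos.2 hA; have := p.hℓ₂; have := p.hc₁; have := p.hc₃; have := p.hk₁
    have := p.hk₃
    positivity
  have herf : Tendsto (fun z => erf (z * √(p.α₁ / p.α₃))) (𝓝[>] 0) (𝓝[>] 0) := by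
    refine tendsto_nhdsWithin_iff.2 ⟨?_, ?_⟩
    · exact ((by fun_prop : Continuous fun z => erf (z * √(p.α₁ / p.α₃))).tendsto' 0 0
        (by simp)).mono_left nhdsWithin_le_nhds
    · filter_upwards [self_mem_nhdsWithin] with z (hz : 0 < z)
      exact erf_pos (mul_pos hz p.sqrt_α₁_div_α₃_pos)
  have hexp : Tendsto (fun z => K * exp (-z ^ 2 * (p.α₁ / p.α₃ - p.α₁ / p.α₂))) (𝓝[>] 0)
      (𝓝 K) :=
    ((by fun_prop : Continuous fun z => K * exp (-z ^ 2 * (p.α₁ / p.α₃ - p.α₁ / p.α₂))).tendsto'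
      0 K (by simp)).mono_left nhdsWithin_le_nhds
  have hlin : Tendsto (fun z => z * exp (z ^ 2 * (p.α₁ / p.α₂))) (𝓝[>] 0) (𝓝 0) :=
    ((by fun_prop : Continuous fun z => z * exp (z ^ 2 * (p.α₁ / p.α₂))).tendsto' 0 0
      (by simp)).mono_left nhdsWithin_le_nhds
  refine ((hexp.pos_mul_atTop hK (tendsto_inv_nhdsGT_zero.comp herf)).atTop_add hlin.neg).congr
    fun z => ?_
  simp only [V, comp_apply, K]
  ring

def μ₂ (μ₁ : ℝ) : ℝ := invFun (fun x => erf (x * √(p.α₁ / p.α₂))) (p.H μ₁)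

variable {p} {z₀ : ℝ}

lemma eq_μ₂_of_erf_mul_sqrt_eq {x μ₁ : ℝ} (h : erf (x * √(p.α₁ / p.α₂)) = p.H μ₁) :
    x = p.μ₂ μ₁ :=
  (strictMono_erf_comp_mul p.sqrt_α₁_div_α₂_pos).injective
    (h.trans (invFun_eq (f := fun x => erf (x * √(p.α₁ / p.α₂))) ⟨x, h⟩).symm)

lemma erf_mul_sqrt_μ₂ {μ₁ : ℝ} (hμ₁ : 0 ≤ μ₁) (hH : 0 ≤ p.H μ₁) :
    erf (p.μ₂ μ₁ * √(p.α₁ / p.α₂)) = p.H μ₁ := by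
  obtain ⟨y, hy⟩ := Ico_subset_range_erf ⟨hH, p.H_lt_one hμ₁⟩
  have := p.sqrt_α₁_div_α₂_pos
  refine invFun_eq (f := fun x => erf (x * √(p.α₁ / p.α₂))) ⟨y / √(p.α₁ / p.α₂), ?_⟩
  simpa [div_mul_cancel₀ _ this.ne'] using hy

lemma H_pos_of_lt {μ₁ : ℝ} (hz₀ : 0 ≤ z₀) (hHz₀ : p.H z₀ = 0) (h : z₀ < μ₁) : 0 < p.H μ₁ :=
  hHz₀ ▸ p.strictMonoOn_H hz₀ (hz₀.trans h.le) h

lemma μ₂_pos {μ₁ : ℝ} (hμ₁ : 0 ≤ μ₁) (hH : 0 < p.H μ₁) : 0 < p.μ₂ μ₁ := by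
  refine (strictMono_erf_comp_mul p.sqrt_α₁_div_α₂_pos).lt_iff_lt.1 ?_
  simpa [erf_mul_sqrt_μ₂ hμ₁ hH.le] using hH

lemma strictMonoOn_μ₂ (hz₀ : 0 ≤ z₀) (hHz₀ : p.H z₀ = 0) : StrictMonoOn p.μ₂ (Ioi z₀) :=
  fun a (ha : z₀ < a) b (hb : z₀ < b) hab => by
  refine (strictMono_erf_comp_mul p.sqrt_α₁_div_α₂_pos).lt_iff_lt.1 ?_
  simp only [erf_mul_sqrt_μ₂ (hz₀.trans ha.le) (H_pos_of_lt hz₀ hHz₀ ha).le,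
    erf_mul_sqrt_μ₂ (hz₀.trans hb.le) (H_pos_of_lt hz₀ hHz₀ hb).le]
  exact p.strictMonoOn_H (hz₀.trans ha.le) (hz₀.trans hb.le) hab

lemma erf_mul_sqrt_μ₂_eventuallyEq (hz₀ : 0 ≤ z₀) (hHz₀ : p.H z₀ = 0) {l : Filter ℝ}
    (hl : Ioi z₀ ∈ l) : (fun μ₁ => erf (p.μ₂ μ₁ * √(p.α₁ / p.α₂))) =ᶠ[l] p.H := by
  filter_upwards [hl] with μ₁ (h : z₀ < μ₁)
  exact erf_mul_sqrt_μ₂ (hz₀.trans h.le) (H_pos_of_lt hz₀ hHz₀ h).le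

lemma continuousOn_μ₂ (hz₀ : 0 ≤ z₀) (hHz₀ : p.H z₀ = 0) : ContinuousOn p.μ₂ (Ioi z₀) := by
  refine fun μ₁ (h : z₀ < μ₁) => ContinuousAt.continuousWithinAt ?_
  rw [(isEmbedding_erf_comp_mul p.sqrt_α₁_div_α₂_pos).isInducing.continuousAt_iff]
  exact (p.continuousOn_H.continuousAt (Ici_mem_nhds (hz₀.trans_lt h))).congr
    (erf_mul_sqrt_μ₂_eventuallyEq hz₀ hHz₀ (Ioi_mem_nhds h)).symm

lemma tendsto_μ₂_nhdsGT (hz₀ : 0 ≤ z₀) (hHz₀ : p.H z₀ = 0) :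
    Tendsto p.μ₂ (𝓝[>] z₀) (𝓝[>] 0) := by
  refine tendsto_nhdsWithin_iff.2 ⟨?_, ?_⟩
  · have hH : Tendsto p.H (𝓝[>] z₀) (𝓝 0) :=
      hHz₀ ▸ (p.continuousOn_H z₀ hz₀).tendsto.mono_left
        (nhdsWithin_mono _ fun _ h => hz₀.trans (le_of_lt h))
    rw [(isEmbedding_erf_comp_mul p.sqrt_α₁_div_α₂_pos).tendsto_nhds_iff]
    simpa [Function.comp_def] using
      hH.congr' (erf_mul_sqrt_μ₂_eventuallyEq hz₀ hHz₀ self_mem_nhdsWithin).symm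
  · filter_upwards [self_mem_nhdsWithin] with μ₁ (h : z₀ < μ₁)
    exact μ₂_pos (hz₀.trans h.le) (H_pos_of_lt hz₀ hHz₀ h)

variable (p A) in
def dirichletResidual (μ₁ : ℝ) : ℝ := p.Q μ₁ - p.V A (p.μ₂ μ₁)

lemma strictMonoOn_dirichletResidual (hA : p.B < A) (hα : p.α₃ < p.α₂) (hz₀ : 0 ≤ z₀)
    (hHz₀ : p.H z₀ = 0) :
    StrictMonoOn (p.dirichletResidual A) (Ioi z₀) := fun a (ha : z₀ < a) b (hb : z₀ < b) hab => by
  have hμ₂ : ∀ {μ₁}, z₀ < μ₁ → p.μ₂ μ₁ ∈ Ioi 0 := fun h =>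
    μ₂_pos (hz₀.trans h.le) (H_pos_of_lt hz₀ hHz₀ h)
  exact sub_lt_sub (p.strictMonoOn_Q (hz₀.trans ha.le) (hz₀.trans hb.le) hab)
    (p.strictAntiOn_V hA hα (hμ₂ ha) (hμ₂ hb) (strictMonoOn_μ₂ hz₀ hHz₀ ha hb hab))

lemma continuousOn_dirichletResidual (hz₀ : 0 ≤ z₀) (hHz₀ : p.H z₀ = 0) :
    ContinuousOn (p.dirichletResidual A) (Ioi z₀) :=
  p.continuous_Q.continuousOn.sub <| p.continuousOn_V.comp (continuousOn_μ₂ hz₀ hHz₀)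
    fun _ h => μ₂_pos (hz₀.trans (le_of_lt h)) (H_pos_of_lt hz₀ hHz₀ h)

lemma tendsto_dirichletResidual_nhdsGT (hA : p.B < A) (hz₀ : 0 ≤ z₀) (hHz₀ : p.H z₀ = 0) :
    Tendsto (p.dirichletResidual A) (𝓝[>] z₀) atBot :=
  ((p.continuous_Q.tendsto z₀).mono_left nhdsWithin_le_nhds).add_atBot
    (tendsto_neg_atTop_atBot.comp
      ((p.tendsto_V_nhdsGT_zero hA).comp (tendsto_μ₂_nhdsGT hz₀ hHz₀)))

lemma tendsto_dirichletResidual_atTop (hA : p.B < A) (hα : p.α₃ < p.α₂) (hz₀ : 0 ≤ z₀)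
    (hHz₀ : p.H z₀ = 0) :
    Tendsto (p.dirichletResidual A) atTop atTop := by
  have hμ₂ : 0 < p.μ₂ (z₀ + 1) := μ₂_pos (by linarith) (H_pos_of_lt hz₀ hHz₀ (by linarith))
  refine tendsto_atTop_mono' _ ?_ (tendsto_atTop_add_const_right _ (-p.V A (p.μ₂ (z₀ + 1)))
    p.tendsto_Q_atTop)
  filter_upwards [eventually_ge_atTop (z₀ + 1)] with μ₁ h
  have := (strictMonoOn_μ₂ hz₀ hHz₀).monotoneOn (show z₀ < z₀ + 1 by linarith)
    (show z₀ < μ₁ by linarith) h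
  have := (p.strictAntiOn_V hA hα).antitoneOn hμ₂ (hμ₂.trans_le this) this
  rw [dirichletResidual]
  linarith

end Params

/-- existence and uniqueness for the reduced Dirichlet problem:
if `α₂ > α₃` and `A > B`, there is a unique `μ₁ > z₀` with `Q(μ₁) = V(μ₂)`,
where `μ₂ ≥ 0` is the unique number with `erf(μ₂√(α₁/α₂)) = H(μ₁)`. -/
theorem dirichlet_exists_unique (p : Params) (A z₀ : ℝ)
    (hα : p.α₃ < p.α₂) (hA : p.B < A)
    (hz₀ : 0 < z₀ ∧ p.H z₀ = 0) :
    ∃! μ₁ : ℝ, z₀ < μ₁ ∧ ∃ μ₂ : ℝ, 0 ≤ μ₂ ∧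
      erf (μ₂ * Real.sqrt (p.α₁ / p.α₂)) = p.H μ₁ ∧
      p.Q μ₁ = p.V A μ₂ := by
  obtain ⟨hz₀, hHz₀⟩ := hz₀
  obtain ⟨μ₁, ⟨hμ₁, hres⟩, huniq⟩ :=
    (Params.strictMonoOn_dirichletResidual hA hα hz₀.le hHz₀).existsUnique_Ioi_eq_of_tendsto
      (Params.continuousOn_dirichletResidual hz₀.le hHz₀)
      (Params.tendsto_dirichletResidual_nhdsGT hA hz₀.le hHz₀)
      (Params.tendsto_dirichletResidual_atTop hA hα hz₀.le hHz₀) (c := 0)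
  have hH := Params.H_pos_of_lt hz₀.le hHz₀ hμ₁
  refine ⟨μ₁, ⟨hμ₁, p.μ₂ μ₁, (Params.μ₂_pos (hz₀.trans hμ₁).le hH).le,
    Params.erf_mul_sqrt_μ₂ (hz₀.trans hμ₁).le hH.le, sub_eq_zero.1 hres⟩, ?_⟩
  rintro ν ⟨hν, μ₂, -, herf, hQV⟩
  obtain rfl := Params.eq_μ₂_of_erf_mul_sqrt_eq herf
  exact huniq ν ⟨hν, sub_eq_zero.2 hQV⟩
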